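/- Let L : ℝ⁴ → ℝ⁴ be the linear map given in 2×2 block form by L = [[B_N, X],[0, Y]], where B_N = diag(λ^N, λ^{−N}) with λ > 1, Y is invertible, N is a positive integer with (‖Y‖ + 1) < λ^N/100 and ‖Y^{−1}‖ < λ^N/100, and ‖X‖ < K for some K > 0. Then, with γ₁, γ₂ > 0 chosen so that the cone C^u = C^u(E₁,γ₁,γ₂) is L-invariant, there exists μ > 1 such that ‖Lv‖ ≥ μ‖v‖ for every v ∈ C^u. -/

import Mathlib

/-!
Take `γ₂ = 1` and `γ₁ = (‖X‖ + 1)⁻¹`. On the cone the `X`-part of every coordinate of `L v` is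
at most `2|v₁|`, so `|(L v)₁| ≥ (λ^N - 2)|v₁|`. This dominates both `λ^{-N}|v₂| + 2|v₁|` and the
`Y`-part `2‖Y‖γ₁|v₁|`, which gives invariance; since `‖v‖ ≤ 4|v₁|` on the cone, `L` expands it by
`μ = (λ^N - 2)/4`.
-/

noncomputable section

namespace ConeInvariance

/-- Euclidean `ℝ²`. -/
abbrev E2 : Type := EuclideanSpace ℝ (Fin 2)

/-- Euclidean `ℝ⁴`. -/
abbrev E4 : Type := EuclideanSpace ℝ (Fin 4)

/-- The last two coordinates of a vector of `ℝ⁴`, as a vector of `ℝ²`. -/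
def tail (v : E4) : E2 := (WithLp.equiv 2 (Fin 2 → ℝ)).symm ![v 2, v 3]

/-- The cone `C^u(E₁, γ₁, γ₂) = {v : |v₂| ≤ γ₂|v₁|, |v₃|,|v₄| ≤ γ₁|v₁|}` around the line
`E₁ = ℝ·e₁`. -/
def cone (γ₁ γ₂ : ℝ) : Set E4 :=
  {v | |v 1| ≤ γ₂ * |v 0| ∧ |v 2| ≤ γ₁ * |v 0| ∧ |v 3| ≤ γ₁ * |v 0|}

lemma _root_.EuclideanSpace.norm_le_sum_abs {ι : Type*} [Fintype ι] (v : EuclideanSpace ℝ ι) :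
    ‖v‖ ≤ ∑ i, |v i| := by
  rw [← sq_le_sq₀ (norm_nonneg _) (Finset.sum_nonneg fun i _ => abs_nonneg (v i)),
    EuclideanSpace.norm_sq_eq]
  simpa only [Real.norm_eq_abs, sq_abs] using
    Finset.sum_sq_le_sq_sum_of_nonneg (s := Finset.univ) fun i _ => abs_nonneg (v i)

lemma _root_.EuclideanSpace.abs_apply_le_norm {ι : Type*} [Fintype ι] (v : EuclideanSpace ℝ ι) (i : ι) :
    |v i| ≤ ‖v‖ :=
  PiLp.norm_apply_le v i

/-- `L = [[diag(a, b), X], [0, Y]]` in block form. -/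
def HasBlockForm (a b : ℝ) (X Y : E2 →L[ℝ] E2) (L : E4 → E4) : Prop :=
  ∀ v : E4,
    L v 0 = a * v 0 + X (tail v) 0 ∧
    L v 1 = b * v 1 + X (tail v) 1 ∧
    L v 2 = Y (tail v) 0 ∧
    L v 3 = Y (tail v) 1

section Cone

variable {γ₁ γ₂ : ℝ} {v : E4}

lemma norm_tail_le_of_mem_cone (hv : v ∈ cone γ₁ γ₂) : ‖tail v‖ ≤ 2 * γ₁ * |v 0| := by
  obtain ⟨-, h2, h3⟩ := hv
  calc ‖tail v‖ ≤ |v 2| + |v 3| :=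
        (EuclideanSpace.norm_le_sum_abs _).trans_eq (Fin.sum_univ_two _)
    _ ≤ 2 * γ₁ * |v 0| := by linarith

lemma norm_le_of_mem_cone (hv : v ∈ cone γ₁ γ₂) : ‖v‖ ≤ (1 + γ₂ + 2 * γ₁) * |v 0| := by
  obtain ⟨h1, h2, h3⟩ := hv
  calc ‖v‖ ≤ |v 0| + |v 1| + |v 2| + |v 3| := by
        simpa only [Fin.sum_univ_four] using EuclideanSpace.norm_le_sum_abs v
    _ ≤ (1 + γ₂ + 2 * γ₁) * |v 0| := by linarith

lemma abs_apply_le_of_mem_cone (T : E2 →L[ℝ] E2) (hv : v ∈ cone γ₁ γ₂) (i : Fin 2) :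
    |T (tail v) i| ≤ ‖T‖ * (2 * γ₁ * |v 0|) :=
  calc |T (tail v) i| ≤ ‖T (tail v)‖ := EuclideanSpace.abs_apply_le_norm _ i
    _ ≤ ‖T‖ * ‖tail v‖ := T.le_opNorm _
    _ ≤ ‖T‖ * (2 * γ₁ * |v 0|) := by gcongr; exact norm_tail_le_of_mem_cone hv

lemma abs_apply_le_two_mul_of_mem_cone (T : E2 →L[ℝ] E2) (hT : ‖T‖ * γ₁ ≤ 1) (hv : v ∈ cone γ₁ γ₂)
    (i : Fin 2) : |T (tail v) i| ≤ 2 * |v 0| :=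
  calc |T (tail v) i| ≤ ‖T‖ * (2 * γ₁ * |v 0|) := abs_apply_le_of_mem_cone T hv i
    _ = 2 * (‖T‖ * γ₁) * |v 0| := by ring
    _ ≤ 2 * 1 * |v 0| := by gcongr
    _ = 2 * |v 0| := by ring

end Cone

section BlockForm

variable {a b γ₁ γ₂ : ℝ} {X Y : E2 →L[ℝ] E2} {L : E4 → E4} {v : E4}

lemma sub_two_mul_le_abs_apply_zero (hL : HasBlockForm a b X Y L) (hX : ‖X‖ * γ₁ ≤ 1)
    (hv : v ∈ cone γ₁ γ₂) : (a - 2) * |v 0| ≤ |L v 0| := by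
  have hXv := abs_apply_le_two_mul_of_mem_cone X hX hv 0
  rw [(hL v).1]
  calc (a - 2) * |v 0| ≤ |a * v 0| - |X (tail v) 0| := by
        rw [abs_mul]; nlinarith [le_abs_self a, abs_nonneg (v 0)]
    _ ≤ |a * v 0 + X (tail v) 0| := by
        simpa using abs_sub_abs_le_abs_sub (a * v 0) (-X (tail v) 0)

lemma mapsTo_cone (hL : HasBlockForm a b X Y L) (hb : |b| ≤ 1) (ha : 5 ≤ a)
    (hY : 2 * ‖Y‖ + 2 ≤ a) (hγ₁ : 0 ≤ γ₁) (hX : ‖X‖ * γ₁ ≤ 1) :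
    Set.MapsTo L (cone γ₁ 1) (cone γ₁ 1) := by
  intro v hv
  have hv0 := sub_two_mul_le_abs_apply_zero hL hX hv
  have hY' : ∀ i, |Y (tail v) i| ≤ γ₁ * |L v 0| := fun i =>
    calc |Y (tail v) i| ≤ ‖Y‖ * (2 * γ₁ * |v 0|) := abs_apply_le_of_mem_cone Y hv i
      _ = γ₁ * (2 * ‖Y‖ * |v 0|) := by ring
      _ ≤ γ₁ * |L v 0| := by
        gcongr; nlinarith [abs_nonneg (v 0)]
  obtain ⟨hL0, hL1, hL2, hL3⟩ := hL v
  refine ⟨?_, hL2 ▸ hY' 0, hL3 ▸ hY' 1⟩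
  have hXv := abs_apply_le_two_mul_of_mem_cone X hX hv 1
  calc |L v 1| ≤ |b| * |v 1| + |X (tail v) 1| := by
        rw [hL1, ← abs_mul]; exact abs_add_le _ _
    _ ≤ 1 * (1 * |v 0|) + 2 * |v 0| := by gcongr; exact hv.1
    _ ≤ 1 * |L v 0| := by nlinarith [abs_nonneg (v 0)]

lemma le_norm_of_mem_cone (hL : HasBlockForm a b X Y L) (ha : 2 ≤ a) (hγ₁ : γ₁ ≤ 1)
    (hX : ‖X‖ * γ₁ ≤ 1) (hv : v ∈ cone γ₁ 1) : (a - 2) / 4 * ‖v‖ ≤ ‖L v‖ :=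
  calc (a - 2) / 4 * ‖v‖ ≤ (a - 2) / 4 * ((1 + 1 + 2 * 1) * |v 0|) := by
        gcongr
        exact (norm_le_of_mem_cone hv).trans (by gcongr)
    _ = (a - 2) * |v 0| := by ring
    _ ≤ |L v 0| := sub_two_mul_le_abs_apply_zero hL hX hv
    _ ≤ ‖L v‖ := EuclideanSpace.abs_apply_le_norm _ 0

theorem exists_cone_mapsTo_and_expanding (hL : HasBlockForm a b X Y L) (hb : |b| ≤ 1)
    (ha : 6 < a) (hY : 2 * ‖Y‖ + 2 ≤ a) :
    ∃ γ₁ > (0 : ℝ), ∃ γ₂ > (0 : ℝ), Set.MapsTo L (cone γ₁ γ₂) (cone γ₁ γ₂) ∧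
      ∃ μ > (1 : ℝ), ∀ v ∈ cone γ₁ γ₂, μ * ‖v‖ ≤ ‖L v‖ := by
  set γ := (‖X‖ + 1)⁻¹
  have hγ : 0 < γ := by positivity
  have hγ_le : γ ≤ 1 := inv_le_one_of_one_le₀ (by linarith [norm_nonneg X])
  have hX : ‖X‖ * γ ≤ 1 := by
    rw [← div_eq_mul_inv, div_le_one (by positivity)]; linarith
  refine ⟨γ, hγ, 1, one_pos, mapsTo_cone hL hb (by linarith) hY hγ.le hX, (a - 2) / 4,
    by linarith, fun v hv => le_norm_of_mem_cone hL (by linarith) hγ_le hX hv⟩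

end BlockForm

theorem cone_invariance_and_expansion_general
    (lam : ℝ) (hlam : 1 < lam) (N : ℕ)
    (X : E2 →L[ℝ] E2) (Y : E2 ≃L[ℝ] E2)
    (hY : ‖(Y : E2 →L[ℝ] E2)‖ + 1 < lam ^ N / 100)
    (L : E4 →L[ℝ] E4)
    (hL : ∀ v : E4,
      L v 0 = lam ^ N * v 0 + X (tail v) 0 ∧
      L v 1 = lam⁻¹ ^ N * v 1 + X (tail v) 1 ∧
      L v 2 = Y (tail v) 0 ∧
      L v 3 = Y (tail v) 1) :
    ∃ γ₁ > (0 : ℝ), ∃ γ₂ > (0 : ℝ), (∀ v ∈ cone γ₁ γ₂, L v ∈ cone γ₁ γ₂) ∧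
      ∃ μ > (1 : ℝ), ∀ v ∈ cone γ₁ γ₂, μ * ‖v‖ ≤ ‖L v‖ := by
  have hb : |lam⁻¹ ^ N| ≤ 1 := by
    rw [abs_of_nonneg (by positivity)]
    exact pow_le_one₀ (by positivity) (inv_le_one_of_one_le₀ hlam.le)
  have hYnorm := norm_nonneg (Y : E2 →L[ℝ] E2)
  exact exists_cone_mapsTo_and_expanding (X := X) (Y := Y) hL hb (by linarith) (by linarith)

/-- Proposition on invariance of cones, items 1–2. Let
`L = [[B_N, X], [0, Y]] : ℝ⁴ → ℝ⁴` in block form, with `B_N = diag(λ^N, λ^{-N})`, `λ > 1`,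
`Y` invertible, `(‖Y‖+1) < λ^N/100`, `‖Y⁻¹‖ < λ^N/100` and `‖X‖ < K`. Then, with `γ₁, γ₂ > 0`
chosen so that the cone `C^u(E₁, γ₁, γ₂)` is `L`-invariant, there exists `μ > 1` such that
`‖Lv‖ ≥ μ‖v‖` for every `v` in the cone. -/
theorem cone_invariance_and_expansion
    (lam : ℝ) (hlam : 1 < lam) (N : ℕ) (hN : 0 < N)
    (X : E2 →L[ℝ] E2) (Y : E2 ≃L[ℝ] E2)
    (K : ℝ) (hK : 0 < K) (hX : ‖X‖ < K)
    (hY : ‖(Y : E2 →L[ℝ] E2)‖ + 1 < lam ^ N / 100)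
    (hYinv : ‖(Y.symm : E2 →L[ℝ] E2)‖ < lam ^ N / 100)
    (L : E4 →L[ℝ] E4)
    (hL : ∀ v : E4,
      L v 0 = lam ^ N * v 0 + X (tail v) 0 ∧
      L v 1 = lam⁻¹ ^ N * v 1 + X (tail v) 1 ∧
      L v 2 = Y (tail v) 0 ∧
      L v 3 = Y (tail v) 1) :
    ∃ γ₁ > (0 : ℝ), ∃ γ₂ > (0 : ℝ), (∀ v ∈ cone γ₁ γ₂, L v ∈ cone γ₁ γ₂) ∧
      ∃ μ > (1 : ℝ), ∀ v ∈ cone γ₁ γ₂, μ * ‖v‖ ≤ ‖L v‖ :=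
  cone_invariance_and_expansion_general lam hlam N X Y hY L hL

end ConeInvariance
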